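/- Assume classical choice (ZAC) and UIP. If C is an E-category and =_C is an equivalence relation on its objects such that a =_C b implies a and b are isomorphic in C, then there exists a family τ making (=_C, τ) an H-structure on C. -/

import Mathlib

universe u v w

/-- An E-category: a type of objects, Hom-setoids, identities and composition
satisfying the category laws up to the Hom-setoid equalities. -/
structure ECat (C : Type u) where
  Hom : C → C → Sort v
  eq : ∀ {a b : C}, Hom a b → Hom a b → Prop
  eqv : ∀ a b : C, Equivalence (fun f g : Hom a b => eq f g)
  ide : ∀ a : C, Hom a a
  comp : ∀ {a b c : C}, Hom b c → Hom a b → Hom a c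
  comp_congr : ∀ {a b c : C} {g g' : Hom b c} {f f' : Hom a b},
    eq g g' → eq f f' → eq (comp g f) (comp g' f')
  ide_comp : ∀ {a b : C} (f : Hom a b), eq (comp (ide b) f) f
  comp_ide : ∀ {a b : C} (f : Hom a b), eq (comp f (ide a)) f
  assoc : ∀ {a b c d : C} (h : Hom c d) (g : Hom b c) (f : Hom a b),
    eq (comp h (comp g f)) (comp (comp h g) f)

/-- An H-structure on an E-category: an equivalence relation on objects together
with transport morphisms τ satisfying (H1)-(H3). -/
structure HStruct {C : Type u} (E : ECat C) where
  R : C → C → Prop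
  requiv : Equivalence R
  tau : ∀ {a b : C}, R a b → E.Hom a b
  H1 : ∀ {a : C} (p : R a a), E.eq (tau p) (E.ide a)
  H2 : ∀ {a b : C} (p q : R a b), E.eq (tau p) (tau q)
  H3 : ∀ {a b c : C} (p : R a b) (q : R b c) (r : R a c),
    E.eq (E.comp (tau q) (tau p)) (tau r)

/-- Objects `a`, `b` of an E-category are isomorphic. -/
def EIso {C : Type u} (E : ECat.{u, v} C) (a b : C) : Prop :=
  ∃ (f : E.Hom a b) (g : E.Hom b a),
    E.eq (E.comp g f) (E.ide a) ∧ E.eq (E.comp f g) (E.ide b)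

/-! Choose a representative `s a` of each `R`-class, so that `R a b` forces the equality
`s a = s b`, and an isomorphism `f a : a ≅ s a` with inverse `g a`. Then
`τ a b p := g b ∘ f a` (with `f a` transported along `s a = s b`) is independent of `p`
because proofs are irrelevant, `τ a a p = g a ∘ f a = 1`, and composing two of them cancels
the middle `f b ∘ g b`. -/

namespace ECat

variable {C : Type u} (E : ECat.{u, v} C)

theorem eq_refl {a b : C} (f : E.Hom a b) : E.eq f f := (E.eqv a b).refl f

theorem eq_symm {a b : C} {f g : E.Hom a b} (h : E.eq f g) : E.eq g f := (E.eqv a b).symm h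

instance {a b : C} : Trans (@ECat.eq C E a b) (@ECat.eq C E a b) (@ECat.eq C E a b) :=
  ⟨(E.eqv a b).trans⟩

def IsHFamily (R : C → C → Prop) (tau : ∀ a b : C, R a b → E.Hom a b) : Prop :=
  (∀ (a : C) (p : R a a), E.eq (tau a a p) (E.ide a)) ∧
  (∀ (a b : C) (p q : R a b), E.eq (tau a b p) (tau a b q)) ∧
  (∀ (a b c : C) (p : R a b) (q : R b c) (r : R a c),
    E.eq (E.comp (tau b c q) (tau a b p)) (tau a c r))

theorem comp_cancel_middle {a b c d : C} (k : E.Hom c d) (f : E.Hom b c) (g : E.Hom c b)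
    (h : E.Hom a c) (hfg : E.eq (E.comp f g) (E.ide c)) :
    E.eq (E.comp (E.comp k f) (E.comp g h)) (E.comp k h) :=
  calc E.eq (E.comp (E.comp k f) (E.comp g h)) (E.comp k (E.comp f (E.comp g h))) :=
        E.eq_symm (E.assoc k f (E.comp g h))
    E.eq _ (E.comp k (E.comp (E.comp f g) h)) := E.comp_congr (E.eq_refl k) (E.assoc f g h)
    E.eq _ (E.comp k (E.comp (E.ide c) h)) :=
        E.comp_congr (E.eq_refl k) (E.comp_congr hfg (E.eq_refl h))
    E.eq _ (E.comp k h) := E.comp_congr (E.eq_refl k) (E.ide_comp h)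

theorem comp_cancel_middle_cast {a b c x y z : C} (fa : E.Hom a x) (fb : E.Hom b y)
    (gb : E.Hom y b) (gc : E.Hom z c) (hfg : E.eq (E.comp fb gb) (E.ide y))
    (hxy : x = y) (hyz : y = z) (hxz : x = z) :
    E.eq (E.comp (E.comp gc (hyz ▸ fb)) (E.comp gb (hxy ▸ fa))) (E.comp gc (hxz ▸ fa)) := by
  subst hxy hyz
  exact E.comp_cancel_middle gc fb gb fa hfg

theorem exists_isHFamily_of_selection {R : C → C → Prop} (s : C → C)
    (hs : ∀ a b : C, R a b → s a = s b) (hiso : ∀ a : C, EIso E a (s a)) :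
    ∃ tau : ∀ a b : C, R a b → E.Hom a b, E.IsHFamily R tau := by
  choose f g hgf hfg using hiso
  refine ⟨fun a b p => E.comp (g b) (hs a b p ▸ f a), fun a _ => hgf a,
    fun a b _ _ => E.eq_refl _, fun a b c p q r => ?_⟩
  exact E.comp_cancel_middle_cast (f a) (f b) (g b) (g c) (hfg b) (hs a b p) (hs b c q) (hs a c r)

end ECat

theorem Equivalence.exists_selection {C : Type u} {R : C → C → Prop} (hR : Equivalence R) :
    ∃ s : C → C, (∀ a, R a (s a)) ∧ ∀ a b, R a b → s a = s b :=
  letI : Setoid C := ⟨R, hR⟩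
  ⟨fun a => (⟦a⟧ : Quotient ‹Setoid C›).out, fun a => hR.symm (Quotient.mk_out a),
    fun _ _ h => congrArg Quotient.out (Quotient.sound h)⟩

theorem zac_uip_extend_to_hstruct_general
    {C : Type u} (E : ECat.{u, v} C) (R : C → C → Prop) (hR : Equivalence R)
    (hiso : ∀ a b : C, R a b → EIso E a b) :
    ∃ tau : ∀ a b : C, R a b → E.Hom a b,
      (∀ (a : C) (p : R a a), E.eq (tau a a p) (E.ide a)) ∧
      (∀ (a b : C) (p q : R a b), E.eq (tau a b p) (tau a b q)) ∧
      (∀ (a b c : C) (p : R a b) (q : R b c) (r : R a c),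
        E.eq (E.comp (tau b c q) (tau a b p)) (tau a c r)) := by
  obtain ⟨s, hRs, hs⟩ := hR.exists_selection
  exact E.exists_isHFamily_of_selection s hs fun a => hiso a (s a) (hRs a)

/-- (ZAC, UIP) If `=_C` is an equivalence relation on the objects of an
E-category refining the isomorphism relation, then there is a family τ making
`(=_C, τ)` an H-structure. -/
theorem zac_uip_extend_to_hstruct
    (ZAC : ∀ (α β : Type u) (SA : Setoid α) (SB : Setoid β)
      (Rel : α → β → Prop),
      (∀ x x' y y', SA.r x x' → SB.r y y' → (Rel x y ↔ Rel x' y')) →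
      (∀ x, ∃ y, Rel x y) →
      ∃ f : α → β, (∀ x x', SA.r x x' → SB.r (f x) (f x')) ∧ ∀ x, Rel x (f x))
    (UIP : ∀ (A : Type u) (a b : A) (p q : a = b), p = q)
    {C : Type u} (E : ECat.{u, v} C) (R : C → C → Prop) (hR : Equivalence R)
    (hiso : ∀ a b : C, R a b → EIso E a b) :
    ∃ tau : ∀ a b : C, R a b → E.Hom a b,
      (∀ (a : C) (p : R a a), E.eq (tau a a p) (E.ide a)) ∧
      (∀ (a b : C) (p q : R a b), E.eq (tau a b p) (tau a b q)) ∧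
      (∀ (a b c : C) (p : R a b) (q : R b c) (r : R a c),
        E.eq (E.comp (tau b c q) (tau a b p)) (tau a c r)) :=
  zac_uip_extend_to_hstruct_general E R hR hiso
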